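/- arXiv:1907.00919 — 2 statements merged into one kernel-verified Lean document; each statement's English description precedes it below -/
import Mathlib

section
/- If λ is a nonempty partition of n whose first row has length q and which has more than one row, then 2/n · Σ_{b∈λ} ct(b) < q − 1; equality 2/n · Σ ct(b) = q − 1 holds if and only if λ = (n) (a single row). -/
/-- A partition given as a weakly decreasing list of positive integers. -/
def IsPartition (l : List ℕ) : Prop :=
  l.Pairwise (· ≥ ·) ∧ ∀ x ∈ l, 0 < x

/-- Sum of contents `y - x` over the boxes of the Young diagram of `l`
(boxes in row `x+1` are `(x+1, y+1)` for `y < l[x]`, content `y - x`). -/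
def contentSum (l : List ℕ) : ℤ :=
  ∑ x ∈ Finset.range l.length, ∑ y ∈ Finset.range (l.getD x 0), ((y : ℤ) - (x : ℤ))

/-!
Twice the content sum of row `x` (0-indexed, of length `r`) is `r (r - 1 - 2x)`, which is at most
`r (q - 1)` because `r ≤ q`, and strictly less as soon as `x > 0` and `r > 0`. Summing over the
rows gives `2 Σ ct ≤ (q - 1) n`, strict when there is a second row; a single row `(n)` gives
equality.
-/

open Finset

lemma two_mul_sum_range_sub (a x : ℕ) :
    2 * ∑ y ∈ range a, ((y : ℤ) - x) = a * (a - 1 - 2 * x) := by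
  induction a with
  | zero => simp
  | succ k ih =>
    rw [sum_range_succ, mul_add, ih]
    push_cast
    ring

lemma two_mul_contentSum (l : List ℕ) :
    2 * contentSum l
      = ∑ x ∈ range l.length, (l.getD x 0 : ℤ) * ((l.getD x 0 : ℤ) - 1 - 2 * x) := by
  rw [contentSum, mul_sum]
  exact sum_congr rfl fun x _ => two_mul_sum_range_sub _ _

lemma List.sum_eq_sum_range_getD {M : Type*} [AddCommMonoid M] (l : List M) :
    l.sum = ∑ x ∈ Finset.range l.length, l.getD x 0 := by
  induction l with
  | nil => simp
  | cons a t ih =>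
    rw [List.sum_cons, ih, List.length_cons, Finset.sum_range_succ', add_comm]
    rfl

namespace IsPartition

variable {l : List ℕ}

lemma getD_le_head (h : IsPartition l) (hne : l ≠ []) (x : ℕ) : l.getD x 0 ≤ l.head hne := by
  obtain ⟨a, t, rfl⟩ := List.exists_cons_of_ne_nil hne
  rcases x with _ | x
  · simp
  · by_cases hx : x < t.length
    · rw [List.getD_cons_succ, List.getD_eq_getElem _ _ hx]
      exact List.rel_of_pairwise_cons h.1 (List.getElem_mem hx)
    · rw [List.getD_cons_succ, List.getD_eq_default _ _ (not_lt.mp hx)]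
      exact Nat.zero_le _

lemma two_mul_contentSum_lt (h : IsPartition l) (hne : l ≠ []) (hlen : 1 < l.length) :
    2 * contentSum l < ((l.head hne : ℤ) - 1) * l.sum := by
  set q := l.head hne
  have hrow : ∀ x, (l.getD x 0 : ℤ) * ((l.getD x 0 : ℤ) - 1 - 2 * x) ≤ ((q : ℤ) - 1) * l.getD x 0 :=
    fun x => by
      have hle : (l.getD x 0 : ℤ) ≤ q := by exact_mod_cast h.getD_le_head hne x
      nlinarith [(l.getD x 0).cast_nonneg (α := ℤ), x.cast_nonneg (α := ℤ)]
  have hsecond : (0 : ℤ) < l.getD 1 0 := by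
    rw [List.getD_eq_getElem _ _ hlen]
    exact_mod_cast h.2 _ (List.getElem_mem hlen)
  rw [two_mul_contentSum, l.sum_eq_sum_range_getD, Nat.cast_sum, mul_sum]
  refine sum_lt_sum (fun x _ => hrow x) ⟨1, mem_range.mpr hlen, ?_⟩
  have hle : (l.getD 1 0 : ℤ) ≤ q := by exact_mod_cast h.getD_le_head hne 1
  push_cast
  nlinarith

end IsPartition

lemma two_mul_contentSum_singleton (a : ℕ) : 2 * contentSum [a] = ((a : ℤ) - 1) * a := by
  rw [two_mul_contentSum, List.length_singleton, sum_range_one, List.getD_cons_zero]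
  push_cast
  ring

/-- Strict inequality when λ has more than one row; equality iff λ = (n). -/
theorem stmt2 (l : List ℕ) (h : IsPartition l) (hne : l ≠ []) (n q : ℕ)
    (hn : l.sum = n) (hq : l.head hne = q) :
    (1 < l.length → 2 / (n : ℚ) * (contentSum l : ℚ) < (q : ℚ) - 1) ∧
    (2 / (n : ℚ) * (contentSum l : ℚ) = (q : ℚ) - 1 ↔ l = [n]) := by
  have hnpos : (0 : ℚ) < n := by
    rw [← hn]
    exact_mod_cast (h.2 _ (List.head_mem hne)).trans_le
      (List.le_sum_of_mem (List.head_mem hne))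
  have hrewrite : 2 / (n : ℚ) * (contentSum l : ℚ) = ((2 * contentSum l : ℤ) : ℚ) / n := by
    push_cast
    ring
  have hlt (hlen : 1 < l.length) : 2 / (n : ℚ) * (contentSum l : ℚ) < (q : ℚ) - 1 := by
    rw [hrewrite, div_lt_iff₀ hnpos]
    exact_mod_cast hn ▸ hq ▸ h.two_mul_contentSum_lt hne hlen
  refine ⟨hlt, fun heq => ?_, ?_⟩
  · have hlen : l.length = 1 := by
      have := List.length_pos_iff.mpr hne
      by_contra hlen
      exact (hlt (by omega)).ne heq
    obtain ⟨a, rfl⟩ := List.length_eq_one_iff.mp hlen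
    rw [← hn, List.sum_singleton]
  · rintro rfl
    obtain rfl : n = q := by simpa using hq
    rw [hrewrite, div_eq_iff hnpos.ne', two_mul_contentSum_singleton]
    push_cast
    ring
end

section
/- Adding any boxes strictly below a q × r rectangle (forming a partition λ = (q^r, λ_{r+1}, …, λ_m) with q > λ_{r+1} ≥ … ≥ λ_m ≥ 1, m > r) strictly lowers the average content: the average content of boxes of λ is strictly less than the average content (q−r)/2 of the boxes of the q × r rectangle. -/
/-!
Twice the content sum of a row of length `a` in row `x` is `a (a - 1) - 2 a x`, and placing a
diagram below `k` rows lowers each of its contents by `k`. So twice the content sum of the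
`q × r` rectangle is `(q - r) r q`, and its average content is exactly `(q - r) / 2`. A diagram
`t` with `n > 0` boxes and all rows shorter than `q` has twice its content sum at most
`(q - 2) n`; placed below the rectangle it contributes at most `(q - 2 - 2r) n < (q - r) n`.
-/

theorem List.sum_range_length_getD {M : Type*} [AddCommMonoid M] (l : List M) :
    ∑ i ∈ Finset.range l.length, l.getD i 0 = l.sum := by
  induction l with
  | nil => simp
  | cons a l ih =>
    rw [List.length_cons, Finset.sum_range_succ', add_comm]
    simp only [List.getD_cons_succ, List.getD_cons_zero, ih, List.sum_cons]

theorem two_mul_sum_range_natCast (n : ℕ) :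
    2 * ∑ i ∈ Finset.range n, (i : ℤ) = n * ((n : ℤ) - 1) := by
  induction n with
  | zero => simp
  | succ n ih => rw [Finset.sum_range_succ, mul_add, ih]; push_cast; ring

theorem two_mul_contentSum_cons (a : ℕ) (l : List ℕ) :
    2 * contentSum (a :: l) = a * ((a : ℤ) - 1) + 2 * contentSum l - 2 * l.sum := by
  have hrow (x : ℕ) : ∑ y ∈ Finset.range (l.getD x 0), ((y : ℤ) - ((x + 1 : ℕ) : ℤ)) =
      ∑ y ∈ Finset.range (l.getD x 0), ((y : ℤ) - x) - l.getD x 0 := by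
    simp only [Finset.sum_sub_distrib, Finset.sum_const, Finset.card_range, nsmul_eq_mul]
    push_cast
    ring
  have hsum : ∑ x ∈ Finset.range l.length, ((l.getD x 0 : ℕ) : ℤ) = l.sum := by
    rw [← Nat.cast_sum, List.sum_range_length_getD]
  rw [contentSum, List.length_cons, Finset.sum_range_succ']
  simp only [List.getD_cons_succ, List.getD_cons_zero, hrow, Nat.cast_zero, sub_zero]
  rw [Finset.sum_sub_distrib, hsum, contentSum]
  linarith [two_mul_sum_range_natCast a]

theorem contentSum_append (l₁ l₂ : List ℕ) :
    contentSum (l₁ ++ l₂) = contentSum l₁ + contentSum l₂ - l₁.length * l₂.sum := by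
  induction l₁ with
  | nil => simp [contentSum]
  | cons a l₁ ih =>
    have h₁ := two_mul_contentSum_cons a (l₁ ++ l₂)
    have h₂ := two_mul_contentSum_cons a l₁
    rw [List.cons_append]
    simp only [List.sum_append, List.length_cons, Nat.cast_add, Nat.cast_one] at h₁ ⊢
    linarith

theorem two_mul_contentSum_replicate (r q : ℕ) :
    2 * contentSum (List.replicate r q) = r * q * ((q : ℤ) - r) := by
  induction r with
  | zero => simp [contentSum]
  | succ r ih =>
    rw [List.replicate_succ, two_mul_contentSum_cons, ih, List.sum_replicate, smul_eq_mul]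
    push_cast
    ring

theorem two_mul_contentSum_le {l : List ℕ} {M : ℤ} (hM : ∀ a ∈ l, (a : ℤ) ≤ M) :
    2 * contentSum l ≤ (M - 1) * l.sum := by
  induction l with
  | nil => simp [contentSum]
  | cons a l ih =>
    have ha : (a : ℤ) ≤ M := hM a List.mem_cons_self
    have hl := ih fun b hb => hM b (List.mem_cons_of_mem a hb)
    have hrow : (a : ℤ) * (a - 1) ≤ a * (M - 1) := by
      apply mul_le_mul_of_nonneg_left <;> omega
    rw [two_mul_contentSum_cons, List.sum_cons, Nat.cast_add]
    nlinarith [Int.natCast_nonneg l.sum]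

theorem IsPartition.le_head {t : List ℕ} (ht : IsPartition t) (htne : t ≠ []) :
    ∀ a ∈ t, a ≤ t.head htne := by
  obtain ⟨b, l, rfl⟩ := List.exists_cons_of_ne_nil htne
  intro a ha
  rcases List.mem_cons.mp ha with rfl | ha
  · exact le_rfl
  · exact List.rel_of_pairwise_cons ht.1 ha

theorem IsPartition.sum_pos {t : List ℕ} (ht : IsPartition t) (htne : t ≠ []) : 0 < t.sum := by
  obtain ⟨b, l, rfl⟩ := List.exists_cons_of_ne_nil htne
  rw [List.sum_cons]
  exact Nat.add_pos_left (ht.2 b List.mem_cons_self) _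

theorem two_mul_contentSum_replicate_append_lt {q r : ℕ} {t : List ℕ} (hlt : ∀ a ∈ t, a < q)
    (hpos : 0 < t.sum) :
    2 * contentSum (List.replicate r q ++ t) < ((q : ℤ) - r) * (List.replicate r q ++ t).sum := by
  have hrect := two_mul_contentSum_replicate r q
  have hbelow : 2 * contentSum t ≤ ((q : ℤ) - 1 - 1) * t.sum :=
    two_mul_contentSum_le fun a ha => by have := hlt a ha; omega
  have hpos' : (0 : ℤ) < t.sum := by exact_mod_cast hpos
  rw [contentSum_append, List.sum_append, List.sum_replicate, List.length_replicate, smul_eq_mul,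
    Nat.cast_add, Nat.cast_mul]
  nlinarith

theorem stmt5_general (q r : ℕ) (t : List ℕ)
    (ht : IsPartition t) (htne : t ≠ []) (hlt : t.head htne < q) :
    (contentSum (List.replicate r q ++ t) : ℚ) / ((List.replicate r q ++ t).sum : ℚ) <
      ((q : ℚ) - (r : ℚ)) / 2 := by
  have hpos := ht.sum_pos htne
  have key := two_mul_contentSum_replicate_append_lt (r := r)
    (fun a ha => (ht.le_head htne a ha).trans_lt hlt) hpos
  have hsum_pos : 0 < (List.replicate r q ++ t).sum := by
    rw [List.sum_append]; exact Nat.add_pos_right _ hpos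
  generalize (List.replicate r q ++ t).sum = S at key hsum_pos ⊢
  rw [div_lt_div_iff₀ (by exact_mod_cast hsum_pos) two_pos]
  have key' : 2 * (contentSum (List.replicate r q ++ t) : ℚ) < ((q : ℚ) - r) * S := by
    exact_mod_cast key
  linarith

/-- Adding boxes strictly below a q × r rectangle strictly lowers the average content
below (q - r)/2. -/
theorem stmt5 (q r : ℕ) (hq : 0 < q) (hr : 0 < r) (t : List ℕ)
    (ht : IsPartition t) (htne : t ≠ []) (hlt : t.head htne < q) :
    (contentSum (List.replicate r q ++ t) : ℚ) / ((List.replicate r q ++ t).sum : ℚ) <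
      ((q : ℚ) - (r : ℚ)) / 2 :=
  stmt5_general q r t ht htne hlt
end
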